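/- In Max-Welter, let A = (a_1, ..., a_k) with k ≥ 3 be a position not of the form (0, 1, ..., k-2, k+i) for i ≥ 0. If the Sprague-Grundy value of A is 2, then a_k - a_{k-1} = 2. -/
import Mathlib


/-- A move in Max-Welter: the coin on the largest occupied square moves to an
empty square strictly to its left. -/
def MWMove (s t : Finset ℕ) : Prop :=
  ∃ (hs : s.Nonempty) (j : ℕ), j < s.max' hs ∧ j ∉ s ∧
    t = insert j (s.erase (s.max' hs))

theorem MWMove.sum_lt {s t : Finset ℕ} (h : MWMove s t) :
    t.sum id < s.sum id := by
  obtain ⟨hs, j, hj, hjs, rfl⟩ := h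
  have hm : s.max' hs ∈ s := s.max'_mem hs
  have hje : j ∉ s.erase (s.max' hs) := fun hc => hjs (Finset.mem_of_mem_erase hc)
  have h2 : (s.erase (s.max' hs)).sum id + s.max' hs = s.sum id :=
    Finset.sum_erase_add s id hm
  rw [Finset.sum_insert hje]
  simp only [id] at *
  omega

/-- Normal-play Sprague-Grundy value of a Max-Welter position. -/
noncomputable def grundy (s : Finset ℕ) : ℕ :=
  sInf {n : ℕ | ∀ t, ∀ _h : MWMove s t, grundy t ≠ n}
termination_by s.sum id
decreasing_by exact _h.sum_lt

open Classical in
/-- Misère Sprague-Grundy value: terminal positions get value 1. -/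
noncomputable def mgrundy (s : Finset ℕ) : ℕ :=
  if ∀ t, ¬ MWMove s t then 1
  else sInf {n : ℕ | ∀ t, ∀ _h : MWMove s t, mgrundy t ≠ n}
termination_by s.sum id
decreasing_by exact _h.sum_lt

/-- Normal play: `s` is a P-position iff every move leads to a non-P-position. -/
def MWPPos (s : Finset ℕ) : Prop :=
  ∀ t, ∀ _h : MWMove s t, ¬ MWPPos t
termination_by s.sum id
decreasing_by exact _h.sum_lt

/-- Misère play: the player to move wins iff there is no move (the opponent made
the last move and loses), or some move leads to a position losing for the opponent. -/
def MWMisereWin (s : Finset ℕ) : Prop :=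
  (∀ t, ¬ MWMove s t) ∨ ∃ t, ∃ _h : MWMove s t, ¬ MWMisereWin t
termination_by s.sum id
decreasing_by exact _h.sum_lt


theorem grundy_def (s : Finset ℕ) :
    grundy s = sInf {n : ℕ | ∀ t, ∀ _h : MWMove s t, grundy t ≠ n} := by
  rw [grundy]

theorem grundy_le_sum (s : Finset ℕ) : grundy s ≤ s.sum id := by
  have H : ∀ n (s : Finset ℕ), s.sum id ≤ n → grundy s ≤ s.sum id := by
    intro n
    induction n with
    | zero =>
      intro s hs
      rw [grundy_def]
      exact Nat.sInf_le fun t h => by have := h.sum_lt; omega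
    | succ n ih =>
      intro s hs
      rw [grundy_def]
      refine Nat.sInf_le fun t h => Nat.ne_of_lt (lt_of_le_of_lt ?_ h.sum_lt)
      exact ih t (by have := h.sum_lt; omega)
  exact H _ s le_rfl

theorem grundy_opt_ne (s t : Finset ℕ) (h : MWMove s t) : grundy t ≠ grundy s := by
  have hne : {n : ℕ | ∀ t, ∀ _h : MWMove s t, grundy t ≠ n}.Nonempty :=
    ⟨s.sum id, fun t h => Nat.ne_of_lt (lt_of_le_of_lt (grundy_le_sum t) h.sum_lt)⟩
  have := Nat.sInf_mem hne
  rw [← grundy_def] at this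
  exact this t h

theorem grundy_lt_opt (s : Finset ℕ) (j : ℕ) (h : j < grundy s) :
    ∃ t, MWMove s t ∧ grundy t = j := by
  rw [grundy_def] at h
  have := Nat.notMem_of_lt_sInf h
  simp only [Set.mem_setOf_eq, not_forall] at this
  obtain ⟨t, h1, h2⟩ := this
  exact ⟨t, h1, not_not.mp h2⟩

theorem grundy_eq (s : Finset ℕ) (v : ℕ) (h1 : ∀ t, MWMove s t → grundy t ≠ v)
    (h2 : ∀ j < v, ∃ t, MWMove s t ∧ grundy t = j) : grundy s = v := by
  rcases lt_trichotomy (grundy s) v with h | h | h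
  · obtain ⟨t, ht, hv⟩ := h2 _ h
    exact absurd hv (grundy_opt_ne s t ht)
  · exact h
  · rw [grundy_def] at h ⊢
    have : v ∈ {n : ℕ | ∀ t, ∀ _h : MWMove s t, grundy t ≠ n} := h1
    exact absurd (Nat.sInf_le this) (not_le.mpr h)

theorem grundy_terminal (s : Finset ℕ) (h : ∀ t, ¬ MWMove s t) : grundy s = 0 :=
  grundy_eq s 0 (fun t ht => absurd ht (h t)) (fun j hj => by omega)

theorem two_le_grundy (s : Finset ℕ) (h0 : ∃ t, MWMove s t ∧ grundy t = 0)
    (h1 : ∃ t, MWMove s t ∧ grundy t = 1) : 2 ≤ grundy s := by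
  obtain ⟨t0, ht0, hg0⟩ := h0
  obtain ⟨t1, ht1, hg1⟩ := h1
  have := grundy_opt_ne s t0 ht0
  have := grundy_opt_ne s t1 ht1
  omega

theorem max'_insert_top (L : Finset ℕ) (m : ℕ) (hm : ∀ x ∈ L, x < m) (h : (insert m L).Nonempty) :
    (insert m L).max' h = m := by
  refine le_antisymm (Finset.max'_le _ _ _ fun x hx => ?_) (Finset.le_max' _ _ (Finset.mem_insert_self _ _))
  rcases Finset.mem_insert.mp hx with rfl | hx
  · exact le_rfl
  · exact le_of_lt (hm x hx)

theorem mwmove_insert_iff (L : Finset ℕ) (m : ℕ) (hm : ∀ x ∈ L, x < m) (t : Finset ℕ) :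
    MWMove (insert m L) t ↔ ∃ j, j < m ∧ j ∉ L ∧ t = insert j L := by
  have hmL : m ∉ L := fun h => lt_irrefl m (hm m h)
  have herase : (insert m L).erase m = L := Finset.erase_insert hmL
  constructor
  · rintro ⟨hs, j, hj, hjs, rfl⟩
    rw [max'_insert_top L m hm hs] at hj ⊢
    exact ⟨j, hj, fun h => hjs (Finset.mem_insert_of_mem h), by rw [herase]⟩
  · rintro ⟨j, hj, hjL, rfl⟩
    have hs : (insert m L).Nonempty := ⟨m, Finset.mem_insert_self _ _⟩
    refine ⟨hs, j, ?_, ?_, ?_⟩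
    · rw [max'_insert_top L m hm hs]; exact hj
    · rw [Finset.mem_insert]; push_neg; exact ⟨by omega, hjL⟩
    · rw [max'_insert_top L m hm hs, herase]

theorem grundy_range (n : ℕ) (hn : 1 ≤ n) : grundy (Finset.range n) = 0 := by
  refine grundy_terminal _ fun t ht => ?_
  obtain ⟨hs, j, hj, hjs, _⟩ := ht
  have hmax : (Finset.range n).max' hs = n - 1 := by
    refine le_antisymm (Finset.max'_le _ _ _ fun x hx => ?_) (Finset.le_max' _ _ ?_)
    · have := Finset.mem_range.mp hx; omega
    · exact Finset.mem_range.mpr (by omega)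
  rw [hmax] at hj
  exact hjs (Finset.mem_range.mpr (by omega))

theorem eq_range_of_full (L : Finset ℕ) (b : ℕ) (hbL : b ∈ L) (hub : ∀ x ∈ L, x ≤ b)
    (h : ∀ j < b, j ∈ L) : L = Finset.range (b + 1) := by
  ext x
  simp only [Finset.mem_range]
  constructor
  · intro hx; have := hub x hx; omega
  · intro hx
    rcases Nat.lt_or_ge x b with h' | h'
    · exact h x h'
    · have : x = b := by omega
      rw [this]; exact hbL

theorem card_le_of_gap (L : Finset ℕ) (b j : ℕ) (hub : ∀ x ∈ L, x ≤ b)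
    (hj : j ≤ b) (hjL : j ∉ L) : L.card ≤ b := by
  have hsub : L ⊆ (Finset.range (b + 1)).erase j := by
    intro x hx
    rw [Finset.mem_erase, Finset.mem_range]
    exact ⟨fun h => hjL (h ▸ hx), by have := hub x hx; omega⟩
  have := Finset.card_le_card hsub
  rwa [Finset.card_erase_of_mem (Finset.mem_range.mpr (by omega)), Finset.card_range] at this

theorem Lprime_facts (L : Finset ℕ) (b j : ℕ) (hbL : b ∈ L) (hub : ∀ x ∈ L, x ≤ b)
    (hjL : j ∉ L) (hjb : j < b) :
    insert j L = insert b (insert j (L.erase b)) ∧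
    (insert j (L.erase b)).card = L.card ∧
    (insert j (L.erase b)).sum id + b = L.sum id + j ∧
    (∀ x ∈ insert j (L.erase b), x < b) := by
  have hje : j ∉ L.erase b := fun h => hjL (Finset.mem_of_mem_erase h)
  refine ⟨?_, ?_, ?_, ?_⟩
  · rw [Finset.insert_comm, Finset.insert_erase hbL]
  · rw [Finset.card_insert_of_notMem hje, Finset.card_erase_of_mem hbL]
    have := Finset.card_pos.mpr ⟨b, hbL⟩
    omega
  · rw [Finset.sum_insert hje]
    have := Finset.sum_erase_add L id hbL
    simp only [id] at *
    omega
  · intro x hx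
    rcases Finset.mem_insert.mp hx with rfl | hx
    · exact hjb
    · have h1 := Finset.mem_of_mem_erase hx
      have h2 := Finset.ne_of_mem_erase hx
      have := hub x h1
      omega

theorem claimC : ∀ n : ℕ, ∀ L : Finset ℕ, ∀ b m : ℕ,
    2 ≤ L.card → b ∈ L → (∀ x ∈ L, x ≤ b) → b < m → L.sum id + m ≤ n →
    ((m = b + 1 ∨ (L = Finset.range L.card ∧ m = L.card + 1)) →
        grundy (insert m L) = (m - L.card) % 2) ∧
    (¬(m = b + 1 ∨ (L = Finset.range L.card ∧ m = L.card + 1)) →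
        2 ≤ grundy (insert m L)) := by
  intro n
  induction n using Nat.strong_induction_on with
  | _ n IH =>
  intro L b m hcard hbL hub hbm hsum
  have hm : ∀ x ∈ L, x < m := fun x hx => lt_of_le_of_lt (hub x hx) hbm
  have hLsub : L ⊆ Finset.range (b + 1) := fun x hx =>
    Finset.mem_range.mpr (by have := hub x hx; omega)
  have hLb1 : L.card ≤ b + 1 := by
    have := Finset.card_le_card hLsub
    simpa using this
  have hb1 : 1 ≤ b := by omega
  constructor
  · rintro (rfl | ⟨hLr, rfl⟩)
    · -- case (i): m = b + 1
      by_cases hfull : ∀ j < b, j ∈ L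
      · have hLr : L = Finset.range (b + 1) := eq_range_of_full L b hbL hub hfull
        have hc : L.card = b + 1 := by rw [hLr, Finset.card_range]
        rw [hLr, ← Finset.range_add_one, grundy_range (b + 2) (by omega), Finset.card_range]
        omega
      · push_neg at hfull
        obtain ⟨j1, hj1b, hj1L⟩ := hfull
        have hcb : L.card ≤ b := card_le_of_gap L b j1 hub (le_of_lt hj1b) hj1L
        apply grundy_eq
        · intro t ht
          rw [mwmove_insert_iff L (b + 1) hm] at ht
          obtain ⟨j, hj, hjL, rfl⟩ := ht
          have hjb : j < b := by
            have : j ≠ b := fun h => hjL (h ▸ hbL)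
            omega
          obtain ⟨heq, hcard', hsum', hlt'⟩ := Lprime_facts L b j hbL hub hjL hjb
          set L' := insert j (L.erase b) with hL'def
          have hL'ne : L'.Nonempty := Finset.card_pos.mp (by omega)
          set b' := L'.max' hL'ne with hb'def
          have hb'L : b' ∈ L' := L'.max'_mem hL'ne
          have hub' : ∀ x ∈ L', x ≤ b' := fun x hx => L'.le_max' x hx
          have hb'b : b' < b := hlt' b' hb'L
          have hIH := IH (L'.sum id + b) (by omega) L' b' b (by omega) hb'L hub' hb'b le_rfl
          rw [heq]
          by_cases hR : (b = b' + 1 ∨ (L' = Finset.range L'.card ∧ b = L'.card + 1))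
          · rw [hIH.1 hR, hcard']
            omega
          · have := hIH.2 hR
            omega
        · intro q hq
          have hp : (b + 1 - L.card) % 2 = 1 ∧ q = 0 := by omega
          set j0 := if b - 1 ∈ L then j1 else b - 1 with hj0def
          have hj0 : j0 < b ∧ j0 ∉ L := by
            by_cases hb1L : b - 1 ∈ L
            · simp only [hj0def, if_pos hb1L]
              exact ⟨hj1b, hj1L⟩
            · simp only [hj0def, if_neg hb1L]
              exact ⟨by omega, hb1L⟩
          obtain ⟨heq, hcard', hsum', hlt'⟩ := Lprime_facts L b j0 hbL hub hj0.2 hj0.1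
          set L' := insert j0 (L.erase b) with hL'def
          have hb'L : b - 1 ∈ L' := by
            by_cases hb1L : b - 1 ∈ L
            · exact Finset.mem_insert_of_mem (Finset.mem_erase.mpr ⟨by omega, hb1L⟩)
            · have : j0 = b - 1 := by rw [hj0def, if_neg hb1L]
              rw [← this]
              exact Finset.mem_insert_self _ _
          have hub' : ∀ x ∈ L', x ≤ b - 1 := fun x hx => by have := hlt' x hx; omega
          have hIH := IH (L'.sum id + b) (by omega) L' (b - 1) b (by omega) hb'L hub'
            (by omega) le_rfl
          have hgv := hIH.1 (Or.inl (by omega))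
          refine ⟨insert b L', ?_, ?_⟩
          · rw [mwmove_insert_iff L (b + 1) hm]
            exact ⟨j0, by omega, hj0.2, heq.symm⟩
          · rw [hgv, hcard']
            omega
    · -- case (i-exc): L = range L.card, m = L.card + 1
      have hval : (L.card + 1 - L.card) % 2 = 1 := by omega
      rw [hval]
      have hmem : ∀ x, x ∈ L ↔ x < L.card := fun x => by
        conv_lhs => rw [hLr]
        rw [Finset.mem_range]
      have hm' : ∀ x ∈ L, x < L.card + 1 := fun x hx => by
        have := (hmem x).mp hx
        omega
      have hcL : L.card ∉ L := fun h => by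
        have := (hmem _).mp h
        omega
      have hmv : MWMove (insert (L.card + 1) L) (insert L.card L) := by
        rw [mwmove_insert_iff L (L.card + 1) hm']
        exact ⟨L.card, by omega, hcL, rfl⟩
      have hg0 : grundy (insert L.card L) = 0 := by
        conv_lhs => rw [hLr]
        rw [show insert (Finset.range L.card).card (Finset.range L.card)
              = Finset.range (L.card + 1) by rw [Finset.card_range, ← Finset.range_add_one]]
        exact grundy_range _ (by omega)
      apply grundy_eq
      · intro t ht
        rw [mwmove_insert_iff L (L.card + 1) hm'] at ht
        obtain ⟨j, hj, hjL, rfl⟩ := ht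
        have : j = L.card := by
          have : ¬ j < L.card := fun h => hjL ((hmem j).mpr h)
          omega
        rw [this, hg0]
        omega
      · intro q hq
        have : q = 0 := by omega
        exact ⟨insert L.card L, hmv, by rw [hg0, this]⟩
  · -- case (ii)
    intro hnot
    push_neg at hnot
    obtain ⟨hm1, hexc⟩ := hnot
    have hm2 : b + 2 ≤ m := by omega
    by_cases hLr : L = Finset.range L.card
    · have hmem : ∀ x, x ∈ L ↔ x < L.card := fun x => by
        conv_lhs => rw [hLr]
        rw [Finset.mem_range]
      have hbc : b = L.card - 1 := by
        have h1 : b < L.card := (hmem b).mp hbL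
        have h2 : L.card - 1 ≤ b := hub _ ((hmem _).mpr (by omega))
        omega
      have hmne : m ≠ L.card + 1 := hexc hLr
      have hmge : L.card + 2 ≤ m := by omega
      have hcL : L.card ∉ L := fun h => by
        have := (hmem _).mp h
        omega
      have hc1L : L.card + 1 ∉ L := fun h => by
        have := (hmem _).mp h
        omega
      apply two_le_grundy
      · refine ⟨insert L.card L, ?_, ?_⟩
        · rw [mwmove_insert_iff L m hm]
          exact ⟨L.card, by omega, hcL, rfl⟩
        · conv_lhs => rw [hLr]
          rw [show insert (Finset.range L.card).card (Finset.range L.card)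
                = Finset.range (L.card + 1) by rw [Finset.card_range, ← Finset.range_add_one]]
          exact grundy_range _ (by omega)
      · refine ⟨insert (L.card + 1) L, ?_, ?_⟩
        · rw [mwmove_insert_iff L m hm]
          exact ⟨L.card + 1, by omega, hc1L, rfl⟩
        · have hIH := IH (L.sum id + (L.card + 1)) (by omega) L b (L.card + 1) hcard hbL hub
            (by omega) le_rfl
          rw [hIH.1 (Or.inr ⟨hLr, rfl⟩)]
          omega
    · have hcb : L.card ≤ b := by
        by_contra h
        have hc : L.card = b + 1 := by omega
        have heqr : L = Finset.range (b + 1) :=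
          Finset.eq_of_subset_of_card_le hLsub (by rw [Finset.card_range]; omega)
        apply hLr
        rw [hc]
        exact heqr
      have hempty : ∃ j1, j1 < b ∧ j1 ∉ L := by
        by_contra h
        push_neg at h
        have := eq_range_of_full L b hbL hub h
        rw [this, Finset.card_range] at hcb
        omega
      obtain ⟨j1, hj1b, hj1L⟩ := hempty
      -- option t1 = insert (b+1) L with grundy (b+1-card)%2
      have hb1L : b + 1 ∉ L := fun h => by have := hub _ h; omega
      have hmv1 : MWMove (insert m L) (insert (b + 1) L) := by
        rw [mwmove_insert_iff L m hm]
        exact ⟨b + 1, by omega, hb1L, rfl⟩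
      have hg1 : grundy (insert (b + 1) L) = (b + 1 - L.card) % 2 := by
        have hIH := IH (L.sum id + (b + 1)) (by omega) L b (b + 1) hcard hbL hub (by omega) le_rfl
        exact hIH.1 (Or.inl rfl)
      -- option t0 = insert b L' with grundy (b-card)%2
      set j0 := if b - 1 ∈ L then j1 else b - 1 with hj0def
      have hj0 : j0 < b ∧ j0 ∉ L := by
        by_cases hb1' : b - 1 ∈ L
        · simp only [hj0def, if_pos hb1']
          exact ⟨hj1b, hj1L⟩
        · simp only [hj0def, if_neg hb1']
          exact ⟨by omega, hb1'⟩
      obtain ⟨heq, hcard', hsum', hlt'⟩ := Lprime_facts L b j0 hbL hub hj0.2 hj0.1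
      set L' := insert j0 (L.erase b) with hL'def
      have hb'L : b - 1 ∈ L' := by
        by_cases hb1' : b - 1 ∈ L
        · exact Finset.mem_insert_of_mem (Finset.mem_erase.mpr ⟨by omega, hb1'⟩)
        · have : j0 = b - 1 := by rw [hj0def, if_neg hb1']
          rw [← this]
          exact Finset.mem_insert_self _ _
      have hub' : ∀ x ∈ L', x ≤ b - 1 := fun x hx => by have := hlt' x hx; omega
      have hmv0 : MWMove (insert m L) (insert b L') := by
        rw [mwmove_insert_iff L m hm]
        exact ⟨j0, by omega, hj0.2, heq.symm⟩
      have hg0 : grundy (insert b L') = (b - L.card) % 2 := by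
        have hIH := IH (L'.sum id + b) (by omega) L' (b - 1) b (by omega) hb'L hub'
          (by omega) le_rfl
        rw [hIH.1 (Or.inl (by omega)), hcard']
      rcases (show ((b - L.card) % 2 = 0 ∧ (b + 1 - L.card) % 2 = 1) ∨
          ((b - L.card) % 2 = 1 ∧ (b + 1 - L.card) % 2 = 0) by omega) with ⟨h0, h1⟩ | ⟨h0, h1⟩
      · exact two_le_grundy _ ⟨_, hmv0, by rw [hg0, h0]⟩ ⟨_, hmv1, by rw [hg1, h1]⟩
      · exact two_le_grundy _ ⟨_, hmv1, by rw [hg1, h1]⟩ ⟨_, hmv0, by rw [hg0, h0]⟩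

/-- positions of Grundy value 2 (other than (0,...,k-2,k+i)) have
a_k - a_{k-1} = 2. -/
theorem maxWelter_grundy_two (k : ℕ) (hk : 3 ≤ k) (a : Fin k → ℕ) (ha : StrictMono a)
    (h3 : ¬ ∃ i : ℕ, Finset.image a Finset.univ = insert (k + i) (Finset.range (k - 1)))
    (hg : grundy (Finset.image a Finset.univ) = 2) :
    a ⟨k - 1, by omega⟩ = a ⟨k - 2, by omega⟩ + 2 := by
  set s := Finset.image a Finset.univ with hs
  set M := a ⟨k - 1, by omega⟩ with hM
  set B := a ⟨k - 2, by omega⟩ with hB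
  have hainj : Function.Injective a := ha.injective
  have hcs : s.card = k := by
    rw [hs, Finset.card_image_of_injective _ hainj, Finset.card_univ, Fintype.card_fin]
  have hMs : M ∈ s := Finset.mem_image_of_mem a (Finset.mem_univ _)
  have hBs : B ∈ s := Finset.mem_image_of_mem a (Finset.mem_univ _)
  have hMub : ∀ x ∈ s, x ≤ M := by
    intro x hx
    obtain ⟨i, _, rfl⟩ := Finset.mem_image.mp hx
    refine ha.monotone ?_
    rw [Fin.le_def]
    have := i.isLt
    simp
    omega
  have hBM : B < M := ha (by rw [Fin.lt_def]; simp; omega)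
  set L := s.erase M with hL
  have hBL : B ∈ L := Finset.mem_erase.mpr ⟨by omega, hBs⟩
  have hBub : ∀ x ∈ L, x ≤ B := by
    intro x hx
    have hxs := Finset.mem_of_mem_erase hx
    have hxM := Finset.ne_of_mem_erase hx
    obtain ⟨i, _, rfl⟩ := Finset.mem_image.mp hxs
    have hik : (i : ℕ) ≠ k - 1 := by
      intro h
      exact hxM (by rw [hM]; congr 1; exact Fin.ext h)
    refine ha.monotone ?_
    rw [Fin.le_def]
    have := i.isLt
    simp
    omega
  have hLM : ∀ x ∈ L, x < M := fun x hx => lt_of_le_of_lt (hBub x hx) hBM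
  have hcL : L.card = k - 1 := by rw [hL, Finset.card_erase_of_mem hMs, hcs]
  have hsins : s = insert M L := (Finset.insert_erase hMs).symm
  have hMB2 : B + 2 ≤ M := by
    by_contra h
    have hM1 : M = B + 1 := by omega
    have := (claimC (L.sum id + M) L B M (by omega) hBL hBub hBM le_rfl).1 (Or.inl hM1)
    rw [← hsins, hg] at this
    omega
  by_contra hne
  have hM3 : B + 3 ≤ M := by omega
  have hLr : L ≠ Finset.range L.card := by
    intro hLr
    have hmem : ∀ x, x ∈ L ↔ x < L.card := fun x => by
      conv_lhs => rw [hLr]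
      rw [Finset.mem_range]
    have hB' : B = k - 2 := by
      have h1 : B < L.card := (hmem B).mp hBL
      have h2 : L.card - 1 ≤ B := hBub _ ((hmem _).mpr (by omega))
      omega
    apply h3
    refine ⟨M - k, ?_⟩
    rw [hsins, hLr, hcL]
    congr 1
    omega
  have hg2 : 2 ≤ grundy (insert (B + 2) L) := by
    refine (claimC (L.sum id + (B + 2)) L B (B + 2) (by omega) hBL hBub (by omega) le_rfl).2 ?_
    rintro (h | ⟨h1, h2⟩)
    · omega
    · exact hLr h1
  have hmv' : MWMove s (insert (B + 2) L) := by
    rw [hsins, mwmove_insert_iff L M hLM]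
    exact ⟨B + 2, by omega, fun h => by have := hBub _ h; omega, rfl⟩
  have hne2 := grundy_opt_ne s _ hmv'
  rw [hg] at hne2
  have h3lt : 2 < grundy (insert (B + 2) L) := by omega
  obtain ⟨t, hmt, hgt⟩ := grundy_lt_opt _ 2 h3lt
  rw [mwmove_insert_iff L (B + 2) (fun x hx => by have := hBub x hx; omega)] at hmt
  obtain ⟨j, hj, hjL, rfl⟩ := hmt
  have hmvs : MWMove s (insert j L) := by
    rw [hsins, mwmove_insert_iff L M hLM]
    exact ⟨j, by omega, hjL, rfl⟩
  have := grundy_opt_ne s _ hmvs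
  rw [hg] at this
  exact this hgt
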